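/- arXiv:1211.6339 — 3 statements merged into one kernel-verified Lean document; each statement's English description precedes it below -/
import Mathlib

section
/- Let ∇₁ = C₁ d/dp, ∇₂ = A₂ d/dx + B₂ d/dy, ∇₃ = A₃ d/dx + B₃ d/dy + C₃ d/dp be derivations on smooth functions of (x,y,p) (for fixed smooth f(x,y,p) > 0), where C₁ = f^{3/2}/(p f_y f_p − 3 f f_y + f_x f_p)^{1/2}, A₂ = f^{1/2}/(p f_y f_p − 3 f f_y + f_x f_p)^{1/2}, B₂ = p·A₂, A₃ = f f_p/(p f_y f_p − 3 f f_y + f_x f_p), B₃ = f(p f_p − 3f)/(p f_y f_p − 3 f f_y + f_x f_p), C₃ = f(p f_y + f_x)/(p f_y f_p − 3 f f_y + f_x f_p), and d/dx = ∂_x, d/dy = ∂_y, d/dp = ∂_p act as total derivatives with f treated as a function of (x,y,p). Then the commutator [∇₁, ∇₂] = ∇₁∘∇₂ − ∇₂∘∇₁, expressed back in the basis (∇₁, ∇₂, ∇₃), equals (1/6)M₄·∇₁ − (1/6)M₃·∇₂ − (1/3)·∇₃, where M₃ = |I₀|^{1/2}H₃/|I₁|^{3/2} and M₄ = H₄/(|I₀|^{1/2}|I₁|^{3/2}),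 with I₀ = f, I₁ = p f_y f_p − 3 f f_y + f_x f_p and H₃, H₄ the explicit second-order expressions H₃ = 3ff_pf_{xp} + 3f(pf_p−3f)f_{yp} + 3f(pf_y+f_x)f_{pp} + f_p(9ff_y − 5f_p(pf_y+f_x)), H₄ = 3f(f_pf_{xx} + (2pf_p−3f)f_{xy} + (pf_y+f_x)(f_{xp}+pf_{yp}) + p(pf_p−3f)f_{yy}) − (pf_y+f_x)(7f_p(pf_y+f_x) − 12ff_y). -/
noncomputable section

/-- Partial derivatives of a function on ℝ³(x,y,p). -/
def pdx (F : ℝ × ℝ × ℝ → ℝ) (q : ℝ × ℝ × ℝ) : ℝ := deriv (fun t => F (t, q.2.1, q.2.2)) q.1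
def pdy (F : ℝ × ℝ × ℝ → ℝ) (q : ℝ × ℝ × ℝ) : ℝ := deriv (fun t => F (q.1, t, q.2.2)) q.2.1
def pdp (F : ℝ × ℝ × ℝ → ℝ) (q : ℝ × ℝ × ℝ) : ℝ := deriv (fun t => F (q.1, q.2.1, t)) q.2.2

/-- The relative invariant `I₁ = p f_y f_p − 3 f f_y + f_x f_p`. -/
def I1 (f : ℝ × ℝ × ℝ → ℝ) (q : ℝ × ℝ × ℝ) : ℝ :=
  q.2.2 * pdy f q * pdp f q - 3 * f q * pdy f q + pdx f q * pdp f q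

/-- `H₁ = 3f_{pp}f² − 2f f_p²`. -/
def H1 (f : ℝ × ℝ × ℝ → ℝ) (q : ℝ × ℝ × ℝ) : ℝ :=
  3 * pdp (pdp f) q * (f q) ^ 2 - 2 * f q * (pdp f q) ^ 2

/-- `H₂ = 3f(f_{xx} + 2pf_{xy} + p²f_{yy}) − 4(pf_y + f_x)²`. -/
def H2 (f : ℝ × ℝ × ℝ → ℝ) (q : ℝ × ℝ × ℝ) : ℝ :=
  3 * f q * (pdx (pdx f) q + 2 * q.2.2 * pdy (pdx f) q + q.2.2 ^ 2 * pdy (pdy f) q)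
    - 4 * (q.2.2 * pdy f q + pdx f q) ^ 2

/-- `H₃`. -/
def H3 (f : ℝ × ℝ × ℝ → ℝ) (q : ℝ × ℝ × ℝ) : ℝ :=
  3 * f q * pdp f q * pdp (pdx f) q
    + 3 * f q * (q.2.2 * pdp f q - 3 * f q) * pdp (pdy f) q
    + 3 * f q * (q.2.2 * pdy f q + pdx f q) * pdp (pdp f) q
    + pdp f q * (9 * f q * pdy f q - 5 * pdp f q * (q.2.2 * pdy f q + pdx f q))

/-- `H₄`. -/
def H4 (f : ℝ × ℝ × ℝ → ℝ) (q : ℝ × ℝ × ℝ) : ℝ :=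
  3 * f q * (pdp f q * pdx (pdx f) q + (2 * q.2.2 * pdp f q - 3 * f q) * pdy (pdx f) q
      + (q.2.2 * pdy f q + pdx f q) * (pdp (pdx f) q + q.2.2 * pdp (pdy f) q)
      + q.2.2 * (q.2.2 * pdp f q - 3 * f q) * pdy (pdy f) q)
    - (q.2.2 * pdy f q + pdx f q) * (7 * pdp f q * (q.2.2 * pdy f q + pdx f q)
      - 12 * f q * pdy f q)

/-- `H₅`. -/
def H5 (f : ℝ × ℝ × ℝ → ℝ) (q : ℝ × ℝ × ℝ) : ℝ :=
  3 * f q * ((pdp f q) ^ 2 * pdx (pdx f) q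
      + 2 * pdp f q * (q.2.2 * pdp f q - 3 * f q) * pdy (pdx f) q
      + (q.2.2 * pdp f q - 3 * f q) ^ 2 * pdy (pdy f) q
      + 2 * (2 * q.2.2 * pdy f q * pdp f q + 2 * pdx f q * pdp f q - 3 * f q * pdy f q)
          * pdp (pdx f) q
      + 2 * (2 * q.2.2 ^ 2 * pdy f q * pdp f q + 2 * q.2.2 * pdx f q * pdp f q
          - 6 * q.2.2 * f q * pdy f q - 3 * f q * pdx f q) * pdp (pdy f) q
      + (q.2.2 * pdy f q + pdx f q) ^ 2 * pdp (pdp f) q)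
    - 18 * (pdp f q) ^ 2 * (q.2.2 * pdy f q + pdx f q) ^ 2
    + 60 * f q * pdy f q * pdp f q * (q.2.2 * pdy f q + pdx f q)
    - 36 * (f q) ^ 2 * (pdy f q) ^ 2

/-- The absolute invariants `M₁, …, M₅` (for `f > 0`, `I₁ > 0`). -/
def M1 (f : ℝ × ℝ × ℝ → ℝ) (q : ℝ × ℝ × ℝ) : ℝ := H1 f q / I1 f q
def M2 (f : ℝ × ℝ × ℝ → ℝ) (q : ℝ × ℝ × ℝ) : ℝ := H2 f q / (f q * I1 f q)
def M3 (f : ℝ × ℝ × ℝ → ℝ) (q : ℝ × ℝ × ℝ) : ℝ :=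
  Real.sqrt (f q) * H3 f q / (I1 f q * Real.sqrt (I1 f q))
def M4 (f : ℝ × ℝ × ℝ → ℝ) (q : ℝ × ℝ × ℝ) : ℝ :=
  H4 f q / (Real.sqrt (f q) * (I1 f q * Real.sqrt (I1 f q)))
def M5 (f : ℝ × ℝ × ℝ → ℝ) (q : ℝ × ℝ × ℝ) : ℝ := H5 f q / (I1 f q) ^ 2

/-- Coefficients of the invariant derivations ∇₁, ∇₂, ∇₃. -/
def C1c (f : ℝ × ℝ × ℝ → ℝ) (q : ℝ × ℝ × ℝ) : ℝ :=
  f q * Real.sqrt (f q) / Real.sqrt (I1 f q)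
def A2c (f : ℝ × ℝ × ℝ → ℝ) (q : ℝ × ℝ × ℝ) : ℝ := Real.sqrt (f q) / Real.sqrt (I1 f q)
def A3c (f : ℝ × ℝ × ℝ → ℝ) (q : ℝ × ℝ × ℝ) : ℝ := f q * pdp f q / I1 f q
def B3c (f : ℝ × ℝ × ℝ → ℝ) (q : ℝ × ℝ × ℝ) : ℝ :=
  f q * (q.2.2 * pdp f q - 3 * f q) / I1 f q
def C3c (f : ℝ × ℝ × ℝ → ℝ) (q : ℝ × ℝ × ℝ) : ℝ :=
  f q * (q.2.2 * pdy f q + pdx f q) / I1 f q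

/-- The invariant derivations ∇₁ = C₁ d/dp, ∇₂ = A₂ d/dx + pA₂ d/dy,
∇₃ = A₃ d/dx + B₃ d/dy + C₃ d/dp, acting on functions of (x,y,p). -/
def nabla1 (f F : ℝ × ℝ × ℝ → ℝ) (q : ℝ × ℝ × ℝ) : ℝ := C1c f q * pdp F q
def nabla2 (f F : ℝ × ℝ × ℝ → ℝ) (q : ℝ × ℝ × ℝ) : ℝ :=
  A2c f q * pdx F q + q.2.2 * A2c f q * pdy F q
def nabla3 (f F : ℝ × ℝ × ℝ → ℝ) (q : ℝ × ℝ × ℝ) : ℝ :=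
  A3c f q * pdx F q + B3c f q * pdy F q + C3c f q * pdp F q

private lemma pd_eq_fderiv {U : Set (ℝ × ℝ × ℝ)} (hU : IsOpen U) {f : ℝ × ℝ × ℝ → ℝ}
    (hf : ContDiffOn ℝ (⊤ : ℕ∞) f U) :
    ∀ r ∈ U, pdx f r = fderiv ℝ f r (1,0,0) ∧ pdy f r = fderiv ℝ f r (0,1,0) ∧
      pdp f r = fderiv ℝ f r (0,0,1) := by
  intro r hr
  have hd : HasFDerivAt f (fderiv ℝ f r) r :=
    ((hf.contDiffAt (hU.mem_nhds hr)).differentiableAt (by simp)).hasFDerivAt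
  refine ⟨?_, ?_, ?_⟩
  · exact (hd.comp_hasDerivAt r.1
      (HasDerivAt.prodMk (hasDerivAt_id r.1) (HasDerivAt.prodMk (hasDerivAt_const _ r.2.1) (hasDerivAt_const _ r.2.2)))).deriv
  · exact (hd.comp_hasDerivAt r.2.1
      (HasDerivAt.prodMk (hasDerivAt_const _ r.1) (HasDerivAt.prodMk (hasDerivAt_id r.2.1) (hasDerivAt_const _ r.2.2)))).deriv
  · exact (hd.comp_hasDerivAt r.2.2
      (HasDerivAt.prodMk (hasDerivAt_const _ r.1) (HasDerivAt.prodMk (hasDerivAt_const _ r.2.1) (hasDerivAt_id r.2.2)))).deriv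

private lemma line_facts {U : Set (ℝ × ℝ × ℝ)} (hU : IsOpen U) {f : ℝ × ℝ × ℝ → ℝ}
    (hf : ContDiffOn ℝ (⊤ : ℕ∞) f U) {q : ℝ × ℝ × ℝ} (hq : q ∈ U)
    {γ : ℝ → ℝ × ℝ × ℝ} {v : ℝ × ℝ × ℝ} {t₀ : ℝ} (hγ : HasDerivAt γ v t₀) (hγ0 : γ t₀ = q) :
    HasDerivAt (fun t => f (γ t)) (fderiv ℝ f q v) t₀ ∧
    HasDerivAt (fun t => pdx f (γ t)) (fderiv ℝ (fderiv ℝ f) q v (1,0,0)) t₀ ∧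
    HasDerivAt (fun t => pdy f (γ t)) (fderiv ℝ (fderiv ℝ f) q v (0,1,0)) t₀ ∧
    HasDerivAt (fun t => pdp f (γ t)) (fderiv ℝ (fderiv ℝ f) q v (0,0,1)) t₀ := by
  subst hγ0
  have hca : ContDiffAt ℝ (⊤ : ℕ∞) f (γ t₀) := hf.contDiffAt (hU.mem_nhds hq)
  have hfd : HasFDerivAt f (fderiv ℝ f (γ t₀)) (γ t₀) :=
    (hca.differentiableAt (by simp)).hasFDerivAt
  have hF'' : HasFDerivAt (fderiv ℝ f) (fderiv ℝ (fderiv ℝ f) (γ t₀)) (γ t₀) :=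
    (((hca.fderiv_right (m := (⊤ : ℕ∞)) (by exact_mod_cast le_top)).differentiableAt
      (by simp))).hasFDerivAt
  have h1 : HasDerivAt (fun t => fderiv ℝ f (γ t)) (fderiv ℝ (fderiv ℝ f) (γ t₀) v) t₀ :=
    hF''.comp_hasDerivAt t₀ hγ
  have hmem : ∀ᶠ t in nhds t₀, γ t ∈ U := hγ.continuousAt.preimage_mem_nhds (hU.mem_nhds hq)
  refine ⟨hfd.comp_hasDerivAt t₀ hγ, ?_, ?_, ?_⟩
  · refine HasDerivAt.congr_of_eventuallyEq
      (by simpa using h1.clm_apply (hasDerivAt_const t₀ ((1:ℝ),(0:ℝ),(0:ℝ)))) ?_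
    filter_upwards [hmem] with t ht using (pd_eq_fderiv hU hf (γ t) ht).1
  · refine HasDerivAt.congr_of_eventuallyEq
      (by simpa using h1.clm_apply (hasDerivAt_const t₀ ((0:ℝ),(1:ℝ),(0:ℝ)))) ?_
    filter_upwards [hmem] with t ht using (pd_eq_fderiv hU hf (γ t) ht).2.1
  · refine HasDerivAt.congr_of_eventuallyEq
      (by simpa using h1.clm_apply (hasDerivAt_const t₀ ((0:ℝ),(0:ℝ),(1:ℝ)))) ?_
    filter_upwards [hmem] with t ht using (pd_eq_fderiv hU hf (γ t) ht).2.2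

set_option maxHeartbeats 2000000 in
/-- the commutation relation `[∇₁,∇₂] = (1/6)M₄∇₁ − (1/6)M₃∇₂ − (1/3)∇₃`,
stated componentwise for the coefficients along d/dx, d/dy, d/dp.  Here
`[∇₁,∇₂]ⁱ = ∇₁(∇₂ⁱ) − ∇₂(∇₁ⁱ)` with `∇₁ = (0,0,C₁)`, `∇₂ = (A₂, pA₂, 0)`,
`∇₃ = (A₃,B₃,C₃)`. -/
theorem commutator_nabla1_nabla2 (U : Set (ℝ × ℝ × ℝ)) (hU : IsOpen U)
    (f : ℝ × ℝ × ℝ → ℝ) (hf : ContDiffOn ℝ (⊤ : ℕ∞) f U)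
    (hfpos : ∀ q ∈ U, 0 < f q) (hI1pos : ∀ q ∈ U, 0 < I1 f q) :
    ∀ q ∈ U,
      -- d/dx component:
      (nabla1 f (fun r => A2c f r) q - nabla2 f (fun _ => (0 : ℝ)) q
        = (1 / 6) * M4 f q * 0 - (1 / 6) * M3 f q * A2c f q - (1 / 3) * A3c f q) ∧
      -- d/dy component:
      (nabla1 f (fun r => r.2.2 * A2c f r) q - nabla2 f (fun _ => (0 : ℝ)) q
        = (1 / 6) * M4 f q * 0 - (1 / 6) * M3 f q * (q.2.2 * A2c f q) - (1 / 3) * B3c f q) ∧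
      -- d/dp component:
      (nabla1 f (fun _ => (0 : ℝ)) q - nabla2 f (fun r => C1c f r) q
        = (1 / 6) * M4 f q * C1c f q - (1 / 6) * M3 f q * 0 - (1 / 3) * C3c f q) := by
  rintro ⟨a, b, c⟩ hq
  obtain ⟨hpd1, hpd2, hpd3⟩ := pd_eq_fderiv hU hf (a, b, c) hq
  have hfq : 0 < f (a, b, c) := hfpos _ hq
  have hIq : 0 < I1 f (a, b, c) := hI1pos _ hq
  have hfne : f (a, b, c) ≠ 0 := ne_of_gt hfq
  have hQne : I1 f (a, b, c) ≠ 0 := ne_of_gt hIq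
  have hsne : Real.sqrt (f (a, b, c)) ≠ 0 := ne_of_gt (Real.sqrt_pos.mpr hfq)
  have hune : Real.sqrt (I1 f (a, b, c)) ≠ 0 := ne_of_gt (Real.sqrt_pos.mpr hIq)
  have hs2 : Real.sqrt (f (a, b, c)) ^ 2 = f (a, b, c) := Real.sq_sqrt hfq.le
  have hu2 : Real.sqrt (I1 f (a, b, c)) ^ 2 = I1 f (a, b, c) := Real.sq_sqrt hIq.le
  obtain ⟨hfP, hxP, hyP, hpP⟩ := line_facts hU hf hq
    (HasDerivAt.prodMk (hasDerivAt_const c a) (HasDerivAt.prodMk (hasDerivAt_const c b) (hasDerivAt_id c))) rfl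
  obtain ⟨hfX, hxX, hyX, hpX⟩ := line_facts hU hf hq
    (HasDerivAt.prodMk (hasDerivAt_id a) (HasDerivAt.prodMk (hasDerivAt_const a b) (hasDerivAt_const a c))) rfl
  obtain ⟨hfY, hxY, hyY, hpY⟩ := line_facts hU hf hq
    (HasDerivAt.prodMk (hasDerivAt_const b a) (HasDerivAt.prodMk (hasDerivAt_id b) (hasDerivAt_const b c))) rfl
  simp only [id_eq] at hfP hxP hyP hpP hfX hxX hyX hpX hfY hxY hyY hpY
  rw [← hpd3] at hfP
  rw [← hpd1] at hfX
  rw [← hpd2] at hfY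
  have hsymm : ∀ v w : ℝ × ℝ × ℝ, fderiv ℝ (fderiv ℝ f) (a, b, c) v w
      = fderiv ℝ (fderiv ℝ f) (a, b, c) w v := by
    have hca : ContDiffAt ℝ (⊤ : ℕ∞) f (a, b, c) := hf.contDiffAt (hU.mem_nhds hq)
    have hev : ∀ᶠ r in nhds (a, b, c), HasFDerivAt f (fderiv ℝ f r) r := by
      filter_upwards [hU.mem_nhds hq] with r hr
      exact ((hf.contDiffAt (hU.mem_nhds hr)).differentiableAt
        (by simp)).hasFDerivAt
    exact second_derivative_symmetric_of_eventually hev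
      ((hca.fderiv_right (m := (⊤ : ℕ∞)) (by exact_mod_cast le_top)).differentiableAt
        (by simp)).hasFDerivAt
  rw [hsymm (0,0,1) (1,0,0)] at hxP
  rw [hsymm (0,0,1) (0,1,0)] at hyP
  rw [hsymm (0,1,0) (1,0,0)] at hxY
  have hXXd : pdx (pdx f) (a, b, c) = fderiv ℝ (fderiv ℝ f) (a, b, c) (1,0,0) (1,0,0) := hxX.deriv
  have hYXd : pdy (pdx f) (a, b, c) = fderiv ℝ (fderiv ℝ f) (a, b, c) (1,0,0) (0,1,0) := hxY.deriv
  have hPXd : pdp (pdx f) (a, b, c) = fderiv ℝ (fderiv ℝ f) (a, b, c) (1,0,0) (0,0,1) := hxP.deriv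
  have hYYd : pdy (pdy f) (a, b, c) = fderiv ℝ (fderiv ℝ f) (a, b, c) (0,1,0) (0,1,0) := hyY.deriv
  have hPYd : pdp (pdy f) (a, b, c) = fderiv ℝ (fderiv ℝ f) (a, b, c) (0,1,0) (0,0,1) := hyP.deriv
  have hPPd : pdp (pdp f) (a, b, c) = fderiv ℝ (fderiv ℝ f) (a, b, c) (0,0,1) (0,0,1) := hpP.deriv
  have hI1exp : I1 f (a, b, c) = c * pdy f (a, b, c) * pdp f (a, b, c) - 3 * f (a, b, c) * pdy f (a, b, c) + pdx f (a, b, c) * pdp f (a, b, c) := rfl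
  have hz2 : nabla2 f (fun _ => (0 : ℝ)) (a, b, c) = 0 := by
    simp [nabla2, pdx, pdy]
  have hI1P : HasDerivAt (fun t => I1 f (a, b, t)) _ c :=
    ((((hasDerivAt_id c).mul hyP).mul hpP).sub ((hfP.const_mul 3).mul hyP)).add (hxP.mul hpP)
  have hA2P : HasDerivAt (fun t => A2c f (a, b, t)) _ c :=
    (hfP.sqrt hfne).div (hI1P.sqrt hQne) hune
  have hI1X : HasDerivAt (fun t => I1 f (t, b, c)) _ a :=
    ((((hasDerivAt_const a c).mul hyX).mul hpX).sub ((hfX.const_mul 3).mul hyX)).add (hxX.mul hpX)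
  have hI1Y : HasDerivAt (fun t => I1 f (a, t, c)) _ b :=
    ((((hasDerivAt_const b c).mul hyY).mul hpY).sub ((hfY.const_mul 3).mul hyY)).add (hxY.mul hpY)
  have hC1X : HasDerivAt (fun t => C1c f (t, b, c)) _ a :=
    (hfX.mul (hfX.sqrt hfne)).div (hI1X.sqrt hQne) hune
  have hC1Y : HasDerivAt (fun t => C1c f (a, t, c)) _ b :=
    (hfY.mul (hfY.sqrt hfne)).div (hI1Y.sqrt hQne) hune
  simp only [id_eq, Pi.mul_apply] at hA2P hC1X hC1Y
  obtain ⟨s, hS⟩ : ∃ x, Real.sqrt (f (a, b, c)) = x := ⟨_, rfl⟩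
  obtain ⟨u, hUU⟩ : ∃ x, Real.sqrt (I1 f (a, b, c)) = x := ⟨_, rfl⟩
  rw [hS] at hs2 hsne
  rw [hUU] at hu2 hune
  rw [hS, hUU] at hA2P hC1X hC1Y
  refine ⟨?_, ?_, ?_⟩
  · -- d/dx component
    have hval : pdp (fun r => A2c f r) (a, b, c) = _ := hA2P.deriv
    rw [hz2, sub_zero]
    simp only [nabla1]
    rw [hval]
    simp only [C1c, A2c, M3, A3c]
    rw [hS, hUU]
    trans (f (a, b, c) * pdp f (a, b, c) / (2 * u ^ 2) - f (a, b, c) * s ^ 2 * (pdy f (a, b, c) * pdp f (a, b, c) + c * ((fderiv ℝ (fderiv ℝ f) (a, b, c) (0,1,0) (0,0,1)) * pdp f (a, b, c) + pdy f (a, b, c) * (fderiv ℝ (fderiv ℝ f) (a, b, c) (0,0,1) (0,0,1))) - 3 * (pdp f (a, b, c) * pdy f (a, b, c) + f (a, b, c) * (fderiv ℝ (fderiv ℝ f) (a, b, c) (0,1,0) (0,0,1))) + ((fderiv ℝ (fderiv ℝ f) (a, b, c) (1,0,0) (0,0,1)) * pdp f (a, b, c) + pdx f (a, b, c) * (fderiv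 ℝ (fderiv ℝ f) (a, b, c) (0,0,1) (0,0,1)))) / (2 * (u ^ 2 * u ^ 2)))
    · field_simp
      ring
    trans (0 - 1 / 6 * (s ^ 2 * H3 f (a, b, c) / (I1 f (a, b, c) * u ^ 2)) - 1 / 3 * (f (a, b, c) * pdp f (a, b, c) / I1 f (a, b, c)))
    · rw [hs2, hu2]
      simp only [H3]
      rw [hPXd, hPYd, hPPd]
      have hQpne : c * pdy f (a, b, c) * pdp f (a, b, c) - 3 * f (a, b, c) * pdy f (a, b, c) + pdx f (a, b, c) * pdp f (a, b, c) ≠ 0 := hI1exp ▸ hQne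
      field_simp
      rw [hI1exp]
      ring
    · field_simp
      ring
  · -- d/dy component
    have hval : pdp (fun r => r.2.2 * A2c f r) (a, b, c) = _ := ((hasDerivAt_id c).mul hA2P).deriv
    rw [hz2, sub_zero]
    simp only [nabla1]
    rw [hval]
    simp only [id_eq, C1c, A2c, M3, B3c]
    rw [hS, hUU]
    trans (f (a, b, c) * s ^ 2 / u ^ 2 + c * (f (a, b, c) * pdp f (a, b, c) / (2 * u ^ 2) - f (a, b, c) * s ^ 2 * (pdy f (a, b, c) * pdp f (a, b, c) + c * ((fderiv ℝ (fderiv ℝ f) (a, b, c) (0,1,0) (0,0,1)) * pdp f (a, b, c) + pdy f (a, b, c) * (fderiv ℝ (fderiv ℝ f) (a, b, c) (0,0,1) (0,0,1))) - 3 * (pdp f (a, b, c) * pdy f (a, b, c) + f (a, b, c) * (fderiv ℝ (fderiv ℝ f) (a, b, c) (0,1,0) (0,0,1))) + ((fderiv ℝ (fderiv ℝ f) (a, b, c) (1,0,0) (0,0,1)) * pdp f (a, b, c) + pdx f (a, b, c) * (fderiv ℝ (fderiv ℝ f) (a, b, c) (0,0,1) (0,0,1)))) / (2 * (u ^ 2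 * u ^ 2))))
    · field_simp
      ring
    trans (0 - 1 / 6 * (c * (s ^ 2 * H3 f (a, b, c)) / (I1 f (a, b, c) * u ^ 2)) - 1 / 3 * (f (a, b, c) * (c * pdp f (a, b, c) - 3 * f (a, b, c)) / I1 f (a, b, c)))
    · rw [hs2, hu2]
      simp only [H3]
      rw [hPXd, hPYd, hPPd]
      have hQpne : c * pdy f (a, b, c) * pdp f (a, b, c) - 3 * f (a, b, c) * pdy f (a, b, c) + pdx f (a, b, c) * pdp f (a, b, c) ≠ 0 := hI1exp ▸ hQne
      field_simp
      rw [hI1exp]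
      ring
    · field_simp
      ring
  · -- d/dp component
    have hz1 : nabla1 f (fun _ => (0 : ℝ)) (a, b, c) = 0 := by
      simp [nabla1, pdp]
    have hvalx : pdx (fun r => C1c f r) (a, b, c) = _ := hC1X.deriv
    have hvaly : pdy (fun r => C1c f r) (a, b, c) = _ := hC1Y.deriv
    rw [hz1]
    simp only [nabla2]
    rw [hvalx, hvaly]
    simp only [A2c, C1c, M4, C3c]
    rw [hS, hUU]
    trans (0 - ((pdx f (a, b, c) * s ^ 2 + f (a, b, c) * (pdx f (a, b, c) / 2)) / u ^ 2 - f (a, b, c) * s ^ 2 * (c * ((fderiv ℝ (fderiv ℝ f) (a, b, c) (1,0,0) (0,1,0)) * pdp f (a, b, c) + pdy f (a, b, c) * (fderiv ℝ (fderiv ℝ f) (a, b, c) (1,0,0) (0,0,1))) - 3 * (pdx f (a, b, c) * pdy f (a, b, c) + f (a, b, c) * (fderiv ℝ (fderiv ℝ f) (a, b, c) (1,0,0) (0,1,0))) + ((fderiv ℝ (fderiv ℝ f) (a, b, c) (1,0,0) (1,0,0)) * pdp f (a, b, c) + pdx f (a, b, c) * (fderiv ℝ (fderiv ℝ f) (a,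 b, c) (1,0,0) (0,0,1)))) / (2 * (u ^ 2 * u ^ 2)) + c * ((pdy f (a, b, c) * s ^ 2 + f (a, b, c) * (pdy f (a, b, c) / 2)) / u ^ 2 - f (a, b, c) * s ^ 2 * (c * ((fderiv ℝ (fderiv ℝ f) (a, b, c) (0,1,0) (0,1,0)) * pdp f (a, b, c) + pdy f (a, b, c) * (fderiv ℝ (fderiv ℝ f) (a, b, c) (0,1,0) (0,0,1))) - 3 * (pdy f (a, b, c) * pdy f (a, b, c) + f (a, b, c) * (fderiv ℝ (fderiv ℝ f) (a, b, c) (0,1,0) (0,1,0))) + ((fderiv ℝ (fderiv ℝ f) (a, b, c) (1,0,0) (0,1,0)) * pdp f (a, b, c) + pdx f (a, b, c) * (fderiv ℝ (fderiv ℝ f) (a, b, c) (0,1,0) (0,0,1)))) / (2 * (u ^ 2 * u ^ 2)))))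
    · field_simp
      ring
    trans (1 / 6 * (f (a, b, c) * H4 f (a, b, c) / (I1 f (a, b, c) * u ^ 2)) - 0 - 1 / 3 * (f (a, b, c) * (c * pdy f (a, b, c) + pdx f (a, b, c)) / I1 f (a, b, c)))
    · rw [hs2, hu2]
      simp only [H4]
      rw [hXXd, hYXd, hPXd, hPYd, hYYd]
      have hQpne : c * pdy f (a, b, c) * pdp f (a, b, c) - 3 * f (a, b, c) * pdy f (a, b, c) + pdx f (a, b, c) * pdp f (a, b, c) ≠ 0 := hI1exp ▸ hQne
      field_simp
      rw [hI1exp]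
      ring
    · field_simp
      ring
end
end

section
/- With I₀ = f, I₁ = p f_y f_p − 3 f f_y + f_x f_p, H₁ = 3f_{pp}f² − 2f f_p², and M₁ = H₁/I₁, M₅ = H₅/I₁² where H₅ = 3f(f_p²f_{xx} + 2f_p(pf_p−3f)f_{xy} + (pf_p−3f)²f_{yy} + 2(2pf_yf_p + 2f_xf_p − 3ff_y)f_{xp} + 2(2p²f_yf_p + 2pf_xf_p − 6pff_y − 3ff_x)f_{yp} + (pf_y+f_x)²f_{pp}) − 18f_p²(pf_y+f_x)² + 60ff_yf_p(pf_y+f_x) − 36f²f_y², and M₃ = f^{1/2}H₃/I₁^{3/2} as above, and ∇₁, ∇₃ the invariant derivations defined previously, the syzygy 6∇₃(M₁) − 6∇₁(M₃) + 2M₁M₅ − 3M₃² − 6M₁ = 0 holds identically (for smooth f with f > 0 and I₁ > 0). -/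
noncomputable section

namespace Syz

abbrev E3 := ℝ × ℝ × ℝ

lemma hasDerivAt_linex (G : E3 → ℝ) (q : E3) (hG : DifferentiableAt ℝ G q) :
    HasDerivAt (fun t => G (t, q.2.1, q.2.2)) (fderiv ℝ G q (1, 0, 0)) q.1 := by
  have hl : HasDerivAt (fun t : ℝ => ((t, q.2.1, q.2.2) : E3)) ((1 : ℝ), (0 : ℝ), (0 : ℝ)) q.1 :=
    (hasDerivAt_id q.1).prodMk ((hasDerivAt_const q.1 (q.2.1, q.2.2)))
  have := hG.hasFDerivAt.comp_hasDerivAt q.1 hl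
  simpa [Function.comp_def] using this

lemma hasDerivAt_liney (G : E3 → ℝ) (q : E3) (hG : DifferentiableAt ℝ G q) :
    HasDerivAt (fun t => G (q.1, t, q.2.2)) (fderiv ℝ G q (0, 1, 0)) q.2.1 := by
  have hl : HasDerivAt (fun t : ℝ => ((q.1, t, q.2.2) : E3)) ((0 : ℝ), (1 : ℝ), (0 : ℝ)) q.2.1 :=
    (hasDerivAt_const q.2.1 q.1).prodMk ((hasDerivAt_id q.2.1).prodMk (hasDerivAt_const q.2.1 q.2.2))
  have := hG.hasFDerivAt.comp_hasDerivAt q.2.1 hl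
  simpa [Function.comp_def] using this

lemma hasDerivAt_linep (G : E3 → ℝ) (q : E3) (hG : DifferentiableAt ℝ G q) :
    HasDerivAt (fun t => G (q.1, q.2.1, t)) (fderiv ℝ G q (0, 0, 1)) q.2.2 := by
  have hl : HasDerivAt (fun t : ℝ => ((q.1, q.2.1, t) : E3)) ((0 : ℝ), (0 : ℝ), (1 : ℝ)) q.2.2 :=
    (hasDerivAt_const q.2.2 q.1).prodMk ((hasDerivAt_const q.2.2 q.2.1).prodMk (hasDerivAt_id q.2.2))
  have := hG.hasFDerivAt.comp_hasDerivAt q.2.2 hl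
  simpa [Function.comp_def] using this

lemma pdx_eq (G : E3 → ℝ) (q : E3) (hG : DifferentiableAt ℝ G q) :
    pdx G q = fderiv ℝ G q (1, 0, 0) := (hasDerivAt_linex G q hG).deriv

lemma pdy_eq (G : E3 → ℝ) (q : E3) (hG : DifferentiableAt ℝ G q) :
    pdy G q = fderiv ℝ G q (0, 1, 0) := (hasDerivAt_liney G q hG).deriv

lemma pdp_eq (G : E3 → ℝ) (q : E3) (hG : DifferentiableAt ℝ G q) :
    pdp G q = fderiv ℝ G q (0, 0, 1) := (hasDerivAt_linep G q hG).deriv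

lemma hasDerivAt_pdx (G : E3 → ℝ) (q : E3) (hG : DifferentiableAt ℝ G q) :
    HasDerivAt (fun t => G (t, q.2.1, q.2.2)) (pdx G q) q.1 := by
  rw [pdx_eq G q hG]; exact hasDerivAt_linex G q hG

lemma hasDerivAt_pdy (G : E3 → ℝ) (q : E3) (hG : DifferentiableAt ℝ G q) :
    HasDerivAt (fun t => G (q.1, t, q.2.2)) (pdy G q) q.2.1 := by
  rw [pdy_eq G q hG]; exact hasDerivAt_liney G q hG

lemma hasDerivAt_pdp (G : E3 → ℝ) (q : E3) (hG : DifferentiableAt ℝ G q) :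
    HasDerivAt (fun t => G (q.1, q.2.1, t)) (pdp G q) q.2.2 := by
  rw [pdp_eq G q hG]; exact hasDerivAt_linep G q hG

lemma contDiffOn_pd {U : Set E3} (hU : IsOpen U) {G : E3 → ℝ}
    (hG : ContDiffOn ℝ (⊤ : ℕ∞) G U) (v : E3) :
    ContDiffOn ℝ (⊤ : ℕ∞) (fun z => fderiv ℝ G z v) U := by
  have h1 : ContDiffOn ℝ (⊤ : ℕ∞) (fderiv ℝ G) U :=
    ((contDiffOn_infty_iff_fderiv_of_isOpen hU).1 hG).2
  exact h1.clm_apply contDiffOn_const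

lemma diffAt {U : Set E3} (hU : IsOpen U) {G : E3 → ℝ} (hG : ContDiffOn ℝ (⊤ : ℕ∞) G U) {q : E3}
    (hq : q ∈ U) : DifferentiableAt ℝ G q :=
  (hG.differentiableOn (by simp)).differentiableAt (hU.mem_nhds hq)

lemma contDiffOn_pdx {U : Set E3} (hU : IsOpen U) {G : E3 → ℝ}
    (hG : ContDiffOn ℝ (⊤ : ℕ∞) G U) : ContDiffOn ℝ (⊤ : ℕ∞) (pdx G) U := by
  refine (contDiffOn_pd hU hG (1, 0, 0)).congr ?_
  intro z hz
  exact pdx_eq G z (diffAt hU hG hz)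

lemma contDiffOn_pdy {U : Set E3} (hU : IsOpen U) {G : E3 → ℝ}
    (hG : ContDiffOn ℝ (⊤ : ℕ∞) G U) : ContDiffOn ℝ (⊤ : ℕ∞) (pdy G) U := by
  refine (contDiffOn_pd hU hG (0, 1, 0)).congr ?_
  intro z hz
  exact pdy_eq G z (diffAt hU hG hz)

lemma contDiffOn_pdp {U : Set E3} (hU : IsOpen U) {G : E3 → ℝ}
    (hG : ContDiffOn ℝ (⊤ : ℕ∞) G U) : ContDiffOn ℝ (⊤ : ℕ∞) (pdp G) U := by
  refine (contDiffOn_pd hU hG (0, 0, 1)).congr ?_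
  intro z hz
  exact pdp_eq G z (diffAt hU hG hz)

lemma fderiv2_symm {U : Set E3} (hU : IsOpen U) {G : E3 → ℝ}
    (hG : ContDiffOn ℝ (⊤ : ℕ∞) G U) {q : E3} (hq : q ∈ U) (v w : E3) :
    fderiv ℝ (fun z => fderiv ℝ G z v) q w = fderiv ℝ (fun z => fderiv ℝ G z w) q v := by
  have h1 : ContDiffOn ℝ (⊤ : ℕ∞) (fderiv ℝ G) U :=
    ((contDiffOn_infty_iff_fderiv_of_isOpen hU).1 hG).2
  have hd : DifferentiableAt ℝ (fderiv ℝ G) q :=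
    (h1.differentiableOn (by simp)).differentiableAt (hU.mem_nhds hq)
  have hev : ∀ᶠ y in nhds q, HasFDerivAt G (fderiv ℝ G y) y := by
    filter_upwards [hU.mem_nhds hq] with y hy
    exact (diffAt hU hG hy).hasFDerivAt
  have hsymm := second_derivative_symmetric_of_eventually hev hd.hasFDerivAt v w
  have ev : ∀ u : E3, fderiv ℝ (fun z => fderiv ℝ G z u) q
      = (ContinuousLinearMap.apply ℝ ℝ u).comp (fderiv ℝ (fderiv ℝ G) q) := by
    intro u
    exact (((ContinuousLinearMap.apply ℝ ℝ u).hasFDerivAt).comp q hd.hasFDerivAt).fderiv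
  rw [ev v, ev w]
  simpa using hsymm.symm

variable {U : Set E3} {f G : E3 → ℝ} {q : E3}

lemma pd_comm_xp (hU : IsOpen U) (hG : ContDiffOn ℝ (⊤ : ℕ∞) G U) (hq : q ∈ U) :
    pdx (pdp G) q = pdp (pdx G) q := by
  have h1 : pdp G =ᶠ[nhds q] fun z => fderiv ℝ G z (0, 0, 1) := by
    filter_upwards [hU.mem_nhds hq] with z hz
    exact pdp_eq G z (diffAt hU hG hz)
  have h2 : pdx G =ᶠ[nhds q] fun z => fderiv ℝ G z (1, 0, 0) := by
    filter_upwards [hU.mem_nhds hq] with z hz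
    exact pdx_eq G z (diffAt hU hG hz)
  rw [pdx_eq _ _ (diffAt hU (contDiffOn_pdp hU hG) hq),
      pdp_eq _ _ (diffAt hU (contDiffOn_pdx hU hG) hq), h1.fderiv_eq, h2.fderiv_eq,
      fderiv2_symm hU hG hq]

lemma pd_comm_yp (hU : IsOpen U) (hG : ContDiffOn ℝ (⊤ : ℕ∞) G U) (hq : q ∈ U) :
    pdy (pdp G) q = pdp (pdy G) q := by
  have h1 : pdp G =ᶠ[nhds q] fun z => fderiv ℝ G z (0, 0, 1) := by
    filter_upwards [hU.mem_nhds hq] with z hz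
    exact pdp_eq G z (diffAt hU hG hz)
  have h2 : pdy G =ᶠ[nhds q] fun z => fderiv ℝ G z (0, 1, 0) := by
    filter_upwards [hU.mem_nhds hq] with z hz
    exact pdy_eq G z (diffAt hU hG hz)
  rw [pdy_eq _ _ (diffAt hU (contDiffOn_pdp hU hG) hq),
      pdp_eq _ _ (diffAt hU (contDiffOn_pdy hU hG) hq), h1.fderiv_eq, h2.fderiv_eq,
      fderiv2_symm hU hG hq]

lemma pd_comm_xy (hU : IsOpen U) (hG : ContDiffOn ℝ (⊤ : ℕ∞) G U) (hq : q ∈ U) :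
    pdx (pdy G) q = pdy (pdx G) q := by
  have h1 : pdy G =ᶠ[nhds q] fun z => fderiv ℝ G z (0, 1, 0) := by
    filter_upwards [hU.mem_nhds hq] with z hz
    exact pdy_eq G z (diffAt hU hG hz)
  have h2 : pdx G =ᶠ[nhds q] fun z => fderiv ℝ G z (1, 0, 0) := by
    filter_upwards [hU.mem_nhds hq] with z hz
    exact pdx_eq G z (diffAt hU hG hz)
  rw [pdx_eq _ _ (diffAt hU (contDiffOn_pdy hU hG) hq),
      pdy_eq _ _ (diffAt hU (contDiffOn_pdx hU hG) hq), h1.fderiv_eq, h2.fderiv_eq,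
      fderiv2_symm hU hG hq]

lemma pdp_congr_on (hU : IsOpen U) {G1 G2 : E3 → ℝ} (h : ∀ z ∈ U, G1 z = G2 z) (hq : q ∈ U) :
    pdp G1 q = pdp G2 q := by
  apply Filter.EventuallyEq.deriv_eq
  have hc : ContinuousAt (fun t : ℝ => ((q.1, q.2.1, t) : E3)) q.2.2 := by fun_prop
  filter_upwards [hc.preimage_mem_nhds (hU.mem_nhds (by simpa using hq))] with t ht
  exact h _ ht

lemma pd3_comm_x (hU : IsOpen U) (hG : ContDiffOn ℝ (⊤ : ℕ∞) G U) (hq : q ∈ U) :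
    pdx (pdp (pdp G)) q = pdp (pdp (pdx G)) q := by
  rw [pd_comm_xp hU (contDiffOn_pdp hU hG) hq]
  exact pdp_congr_on hU (fun z hz => pd_comm_xp hU hG hz) hq

lemma pd3_comm_y (hU : IsOpen U) (hG : ContDiffOn ℝ (⊤ : ℕ∞) G U) (hq : q ∈ U) :
    pdy (pdp (pdp G)) q = pdp (pdp (pdy G)) q := by
  rw [pd_comm_yp hU (contDiffOn_pdp hU hG) hq]
  exact pdp_congr_on hU (fun z hz => pd_comm_yp hU hG hz) hq

end Syz

namespace Syz

lemma six_nabla3_M1 (f : E3 → ℝ) (x y p : ℝ) {DHx DHy DHp DIx DIy DIp : ℝ}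
    (hH1x : HasDerivAt (fun t => H1 f (t, y, p)) DHx x)
    (hI1x : HasDerivAt (fun t => I1 f (t, y, p)) DIx x)
    (hH1y : HasDerivAt (fun t => H1 f (x, t, p)) DHy y)
    (hI1y : HasDerivAt (fun t => I1 f (x, t, p)) DIy y)
    (hH1p : HasDerivAt (fun t => H1 f (x, y, t)) DHp p)
    (hI1p : HasDerivAt (fun t => I1 f (x, y, t)) DIp p)
    (hne : I1 f (x, y, p) ≠ 0) :
    6 * nabla3 f (M1 f) (x, y, p) =
      (6 * (f (x, y, p) * (pdp f (x, y, p) * (DHx * I1 f (x, y, p) - H1 f (x, y, p) * DIx)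
        + (p * pdp f (x, y, p) - 3 * f (x, y, p)) * (DHy * I1 f (x, y, p) - H1 f (x, y, p) * DIy)
        + (p * pdy f (x, y, p) + pdx f (x, y, p))
            * (DHp * I1 f (x, y, p) - H1 f (x, y, p) * DIp))))
        / (I1 f (x, y, p)) ^ 3 := by
  have e1 : pdx (M1 f) (x, y, p)
      = (DHx * I1 f (x, y, p) - H1 f (x, y, p) * DIx) / (I1 f (x, y, p)) ^ 2 := by
    have e : pdx (M1 f) (x, y, p) = _ := (hH1x.div hI1x hne).deriv
    rw [e]
  have e2 : pdy (M1 f) (x, y, p)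
      = (DHy * I1 f (x, y, p) - H1 f (x, y, p) * DIy) / (I1 f (x, y, p)) ^ 2 := by
    have e : pdy (M1 f) (x, y, p) = _ := (hH1y.div hI1y hne).deriv
    rw [e]
  have e3 : pdp (M1 f) (x, y, p)
      = (DHp * I1 f (x, y, p) - H1 f (x, y, p) * DIp) / (I1 f (x, y, p)) ^ 2 := by
    have e : pdp (M1 f) (x, y, p) = _ := (hH1p.div hI1p hne).deriv
    rw [e]
  simp only [nabla3, A3c, B3c, C3c]
  rw [e1, e2, e3]
  field_simp

lemma six_nabla1_M3 (f : E3 → ℝ) (x y p : ℝ) {D3 DIp : ℝ}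
    (hfd : HasDerivAt (fun t => f (x, y, t)) (pdp f (x, y, p)) p)
    (hH3p : HasDerivAt (fun t => H3 f (x, y, t)) D3 p)
    (hI1p : HasDerivAt (fun t => I1 f (x, y, t)) DIp p)
    (hb : 0 < f (x, y, p)) (hI : 0 < I1 f (x, y, p)) :
    6 * nabla1 f (M3 f) (x, y, p) =
      (3 * f (x, y, p) * pdp f (x, y, p) * H3 f (x, y, p) * I1 f (x, y, p)
        + 6 * (f (x, y, p)) ^ 2 * D3 * I1 f (x, y, p)
        - 9 * (f (x, y, p)) ^ 2 * H3 f (x, y, p) * DIp) / (I1 f (x, y, p)) ^ 3 := by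
  have hbne : f (x, y, p) ≠ 0 := ne_of_gt hb
  have hIne : I1 f (x, y, p) ≠ 0 := ne_of_gt hI
  have hsb : Real.sqrt (f (x, y, p)) ≠ 0 := by positivity
  have hsI : Real.sqrt (I1 f (x, y, p)) ≠ 0 := by positivity
  have hden : I1 f (x, y, p) * Real.sqrt (I1 f (x, y, p)) ≠ 0 := mul_ne_zero hIne hsI
  have hM3 := (((hfd.sqrt hbne).mul hH3p).div (hI1p.mul (hI1p.sqrt hIne)) hden)
  have e4 : pdp (M3 f) (x, y, p) = _ := hM3.deriv
  simp only [nabla1, C1c]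
  rw [e4]
  simp only [Pi.mul_apply]
  obtain ⟨T, hT⟩ : ∃ T, Real.sqrt (f (x, y, p)) = T := ⟨_, rfl⟩
  obtain ⟨S, hS⟩ : ∃ S, Real.sqrt (I1 f (x, y, p)) = S := ⟨_, rfl⟩
  have hT0 : T ≠ 0 := hT ▸ hsb
  have hS0 : S ≠ 0 := hS ▸ hsI
  have hT2 : T ^ 2 = f (x, y, p) := by rw [← hT]; exact Real.sq_sqrt hb.le
  have hS2 : S ^ 2 = I1 f (x, y, p) := by rw [← hS]; exact Real.sq_sqrt hI.le
  rw [hT, hS, ← hT2, ← hS2]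
  field_simp
  ring

lemma two_M1_M5 (f : E3 → ℝ) (x y p : ℝ) (hne : I1 f (x, y, p) ≠ 0) :
    2 * M1 f (x, y, p) * M5 f (x, y, p)
      = (2 * H1 f (x, y, p) * H5 f (x, y, p)) / (I1 f (x, y, p)) ^ 3 := by
  simp only [M1, M5]
  field_simp

lemma three_M3_sq (f : E3 → ℝ) (x y p : ℝ) (hb : 0 < f (x, y, p)) (hI : 0 < I1 f (x, y, p)) :
    3 * M3 f (x, y, p) ^ 2
      = (3 * f (x, y, p) * H3 f (x, y, p) ^ 2) / (I1 f (x, y, p)) ^ 3 := by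
  have hne : I1 f (x, y, p) ≠ 0 := ne_of_gt hI
  simp only [M3]
  rw [div_pow, mul_pow, mul_pow, Real.sq_sqrt hb.le, Real.sq_sqrt hI.le]
  field_simp

lemma six_M1 (f : E3 → ℝ) (x y p : ℝ) (hne : I1 f (x, y, p) ≠ 0) :
    6 * M1 f (x, y, p) = (6 * H1 f (x, y, p) * I1 f (x, y, p) ^ 2) / (I1 f (x, y, p)) ^ 3 := by
  simp only [M1]
  field_simp

end Syz
/-- the fourth syzygy of relation (18):
`6∇₃(M₁) − 6∇₁(M₃) + 2M₁M₅ − 3M₃² − 6M₁ = 0`. -/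
theorem syzygy_four (U : Set (ℝ × ℝ × ℝ)) (hU : IsOpen U)
    (f : ℝ × ℝ × ℝ → ℝ) (hf : ContDiffOn ℝ (⊤ : ℕ∞) f U)
    (hfpos : ∀ q ∈ U, 0 < f q) (hI1pos : ∀ q ∈ U, 0 < I1 f q) :
    ∀ q ∈ U,
      6 * nabla3 f (M1 f) q - 6 * nabla1 f (M3 f) q
        + 2 * M1 f q * M5 f q - 3 * (M3 f q) ^ 2 - 6 * M1 f q = 0 := by
  intro q hq
  obtain ⟨x, y, p⟩ := q
  have hb : 0 < f (x, y, p) := hfpos _ hq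
  have hI : 0 < I1 f (x, y, p) := hI1pos _ hq
  have hne : I1 f (x, y, p) ≠ 0 := ne_of_gt hI
  have hs : ContDiffOn ℝ (⊤ : ℕ∞) f U := hf.of_le (by simp)
  have hsx := Syz.contDiffOn_pdx hU hs
  have hsy := Syz.contDiffOn_pdy hU hs
  have hsp := Syz.contDiffOn_pdp hU hs
  have hsxp := Syz.contDiffOn_pdp hU hsx
  have hsyp := Syz.contDiffOn_pdp hU hsy
  have hspp := Syz.contDiffOn_pdp hU hsp
  -- atoms along the x-line
  have a1 : HasDerivAt (fun t => f (t, y, p)) (pdx f (x, y, p)) x :=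
    Syz.hasDerivAt_pdx f (x, y, p) (Syz.diffAt hU hs hq)
  have a2 : HasDerivAt (fun t => pdx f (t, y, p)) (pdx (pdx f) (x, y, p)) x :=
    Syz.hasDerivAt_pdx (pdx f) (x, y, p) (Syz.diffAt hU hsx hq)
  have a3 : HasDerivAt (fun t => pdy f (t, y, p)) (pdy (pdx f) (x, y, p)) x := by
    have h : HasDerivAt (fun t => pdy f (t, y, p)) (pdx (pdy f) (x, y, p)) x :=
      Syz.hasDerivAt_pdx (pdy f) (x, y, p) (Syz.diffAt hU hsy hq)
    rwa [Syz.pd_comm_xy hU hs hq] at h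
  have a4 : HasDerivAt (fun t => pdp f (t, y, p)) (pdp (pdx f) (x, y, p)) x := by
    have h : HasDerivAt (fun t => pdp f (t, y, p)) (pdx (pdp f) (x, y, p)) x :=
      Syz.hasDerivAt_pdx (pdp f) (x, y, p) (Syz.diffAt hU hsp hq)
    rwa [Syz.pd_comm_xp hU hs hq] at h
  have a5 : HasDerivAt (fun t => pdp (pdp f) (t, y, p)) (pdp (pdp (pdx f)) (x, y, p)) x := by
    have h : HasDerivAt (fun t => pdp (pdp f) (t, y, p)) (pdx (pdp (pdp f)) (x, y, p)) x :=
      Syz.hasDerivAt_pdx (pdp (pdp f)) (x, y, p) (Syz.diffAt hU hspp hq)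
    rwa [Syz.pd3_comm_x hU hs hq] at h
  -- atoms along the y-line
  have b1 : HasDerivAt (fun t => f (x, t, p)) (pdy f (x, y, p)) y :=
    Syz.hasDerivAt_pdy f (x, y, p) (Syz.diffAt hU hs hq)
  have b2 : HasDerivAt (fun t => pdx f (x, t, p)) (pdy (pdx f) (x, y, p)) y :=
    Syz.hasDerivAt_pdy (pdx f) (x, y, p) (Syz.diffAt hU hsx hq)
  have b3 : HasDerivAt (fun t => pdy f (x, t, p)) (pdy (pdy f) (x, y, p)) y :=
    Syz.hasDerivAt_pdy (pdy f) (x, y, p) (Syz.diffAt hU hsy hq)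
  have b4 : HasDerivAt (fun t => pdp f (x, t, p)) (pdp (pdy f) (x, y, p)) y := by
    have h : HasDerivAt (fun t => pdp f (x, t, p)) (pdy (pdp f) (x, y, p)) y :=
      Syz.hasDerivAt_pdy (pdp f) (x, y, p) (Syz.diffAt hU hsp hq)
    rwa [Syz.pd_comm_yp hU hs hq] at h
  have b5 : HasDerivAt (fun t => pdp (pdp f) (x, t, p)) (pdp (pdp (pdy f)) (x, y, p)) y := by
    have h : HasDerivAt (fun t => pdp (pdp f) (x, t, p)) (pdy (pdp (pdp f)) (x, y, p)) y :=
      Syz.hasDerivAt_pdy (pdp (pdp f)) (x, y, p) (Syz.diffAt hU hspp hq)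
    rwa [Syz.pd3_comm_y hU hs hq] at h
  -- atoms along the p-line
  have c1 : HasDerivAt (fun t => f (x, y, t)) (pdp f (x, y, p)) p :=
    Syz.hasDerivAt_pdp f (x, y, p) (Syz.diffAt hU hs hq)
  have c2 : HasDerivAt (fun t => pdx f (x, y, t)) (pdp (pdx f) (x, y, p)) p :=
    Syz.hasDerivAt_pdp (pdx f) (x, y, p) (Syz.diffAt hU hsx hq)
  have c3 : HasDerivAt (fun t => pdy f (x, y, t)) (pdp (pdy f) (x, y, p)) p :=
    Syz.hasDerivAt_pdp (pdy f) (x, y, p) (Syz.diffAt hU hsy hq)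
  have c4 : HasDerivAt (fun t => pdp f (x, y, t)) (pdp (pdp f) (x, y, p)) p :=
    Syz.hasDerivAt_pdp (pdp f) (x, y, p) (Syz.diffAt hU hsp hq)
  have c5 : HasDerivAt (fun t => pdp (pdx f) (x, y, t)) (pdp (pdp (pdx f)) (x, y, p)) p :=
    Syz.hasDerivAt_pdp (pdp (pdx f)) (x, y, p) (Syz.diffAt hU hsxp hq)
  have c6 : HasDerivAt (fun t => pdp (pdy f) (x, y, t)) (pdp (pdp (pdy f)) (x, y, p)) p :=
    Syz.hasDerivAt_pdp (pdp (pdy f)) (x, y, p) (Syz.diffAt hU hsyp hq)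
  have c7 : HasDerivAt (fun t => pdp (pdp f) (x, y, t)) (pdp (pdp (pdp f)) (x, y, p)) p :=
    Syz.hasDerivAt_pdp (pdp (pdp f)) (x, y, p) (Syz.diffAt hU hspp hq)
  have hid : HasDerivAt (fun t : ℝ => t) 1 p := hasDerivAt_id p
  -- derivatives of H1 and I1 along the three lines, and of H3 along the p-line
  have hH1x : HasDerivAt (fun t => H1 f (t, y, p))
      (3 * pdp (pdp (pdx f)) (x, y, p) * f (x, y, p) ^ 2 + 6 * pdp (pdp f) (x, y, p) * f (x, y, p) * pdx f (x, y, p) - 2 * pdx f (x, y, p) * pdp f (x, y, p) ^ 2 - 4 * f (x, y, p) * pdp f (x, y, p) * pdp (pdx f) (x, y, p)) x :=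
    (((a5.const_mul 3).mul (a1.pow 2)).sub ((a1.const_mul 2).mul (a4.pow 2))).congr_deriv
      (by simp only [Pi.pow_apply, Pi.mul_apply]; ring)
  have hH1y : HasDerivAt (fun t => H1 f (x, t, p))
      (3 * pdp (pdp (pdy f)) (x, y, p) * f (x, y, p) ^ 2 + 6 * pdp (pdp f) (x, y, p) * f (x, y, p) * pdy f (x, y, p) - 2 * pdy f (x, y, p) * pdp f (x, y, p) ^ 2 - 4 * f (x, y, p) * pdp f (x, y, p) * pdp (pdy f) (x, y, p)) y :=
    (((b5.const_mul 3).mul (b1.pow 2)).sub ((b1.const_mul 2).mul (b4.pow 2))).congr_deriv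
      (by simp only [Pi.pow_apply, Pi.mul_apply]; ring)
  have hH1p : HasDerivAt (fun t => H1 f (x, y, t))
      (3 * pdp (pdp (pdp f)) (x, y, p) * f (x, y, p) ^ 2 + 6 * pdp (pdp f) (x, y, p) * f (x, y, p) * pdp f (x, y, p) - 2 * pdp f (x, y, p) ^ 3 - 4 * f (x, y, p) * pdp f (x, y, p) * pdp (pdp f) (x, y, p)) p :=
    (((c7.const_mul 3).mul (c1.pow 2)).sub ((c1.const_mul 2).mul (c4.pow 2))).congr_deriv
      (by simp only [Pi.pow_apply, Pi.mul_apply]; ring)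
  have hI1x : HasDerivAt (fun t => I1 f (t, y, p))
      (p * pdy (pdx f) (x, y, p) * pdp f (x, y, p) + p * pdy f (x, y, p) * pdp (pdx f) (x, y, p) - 3 * pdx f (x, y, p) * pdy f (x, y, p) - 3 * f (x, y, p) * pdy (pdx f) (x, y, p) + pdx (pdx f) (x, y, p) * pdp f (x, y, p) + pdx f (x, y, p) * pdp (pdx f) (x, y, p)) x :=
    (((((hasDerivAt_const x p).mul a3).mul a4).sub ((a1.const_mul 3).mul a3)).add
      (a2.mul a4)).congr_deriv (by simp only [Pi.pow_apply, Pi.mul_apply]; ring)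
  have hI1y : HasDerivAt (fun t => I1 f (x, t, p))
      (p * pdy (pdy f) (x, y, p) * pdp f (x, y, p) + p * pdy f (x, y, p) * pdp (pdy f) (x, y, p) - 3 * pdy f (x, y, p) ^ 2 - 3 * f (x, y, p) * pdy (pdy f) (x, y, p) + pdy (pdx f) (x, y, p) * pdp f (x, y, p) + pdx f (x, y, p) * pdp (pdy f) (x, y, p)) y :=
    (((((hasDerivAt_const y p).mul b3).mul b4).sub ((b1.const_mul 3).mul b3)).add
      (b2.mul b4)).congr_deriv (by simp only [Pi.pow_apply, Pi.mul_apply]; ring)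
  have hI1p : HasDerivAt (fun t => I1 f (x, y, t))
      (pdy f (x, y, p) * pdp f (x, y, p) + p * pdp (pdy f) (x, y, p) * pdp f (x, y, p) + p * pdy f (x, y, p) * pdp (pdp f) (x, y, p) - 3 * pdp f (x, y, p) * pdy f (x, y, p) - 3 * f (x, y, p) * pdp (pdy f) (x, y, p) + pdp (pdx f) (x, y, p) * pdp f (x, y, p) + pdx f (x, y, p) * pdp (pdp f) (x, y, p)) p :=
    ((((hid.mul c3).mul c4).sub ((c1.const_mul 3).mul c3)).add
      (c2.mul c4)).congr_deriv (by simp only [Pi.pow_apply, Pi.mul_apply]; ring)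
  have hH3p : HasDerivAt (fun t => H3 f (x, y, t))
      (3 * (pdp f (x, y, p) * pdp f (x, y, p) * pdp (pdx f) (x, y, p) + f (x, y, p) * pdp (pdp f) (x, y, p) * pdp (pdx f) (x, y, p) + f (x, y, p) * pdp f (x, y, p) * pdp (pdp (pdx f)) (x, y, p)) + 3 * (pdp f (x, y, p) * (p * pdp f (x, y, p) - 3 * f (x, y, p)) * pdp (pdy f) (x, y, p) + f (x, y, p) * (pdp f (x, y, p) + p * pdp (pdp f) (x, y, p) - 3 * pdp f (x, y, p)) * pdp (pdy f) (x, y, p) + f (x, y, p) * (p * pdp f (x, y, p) - 3 * f (x, y, p)) * pdp (pdp (pdy f)) (x, y, p)) + 3 * (pdp f (x, y, p) * (p * pdy f (x, y, p) + pdx f (x, y, p)) * pdp (pdp f) (x, y, p) + f (x, y, p) * (pdy f (x, y, p) + p * pdp (pdy f) (x, y, p) + pdp (pdx f) (x, y, p)) * pdp (pdp f) (x, y, p) + f (x, y, p) * (p * pdy f (x, y, p) + pdx f (x, y, p)) * pdp (pdp (pdp f)) (x, y, p)) + pdp (pdp f) (x, y, p) * (9 * f (x, y, p) * pdy f (x,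 y, p) - 5 * pdp f (x, y, p) * (p * pdy f (x, y, p) + pdx f (x, y, p))) + pdp f (x, y, p) * (9 * pdp f (x, y, p) * pdy f (x, y, p) + 9 * f (x, y, p) * pdp (pdy f) (x, y, p) - 5 * pdp (pdp f) (x, y, p) * (p * pdy f (x, y, p) + pdx f (x, y, p)) - 5 * pdp f (x, y, p) * (pdy f (x, y, p) + p * pdp (pdy f) (x, y, p) + pdp (pdx f) (x, y, p)))) p :=
    (((((c1.const_mul 3).mul c4).mul c5).add
      (((c1.const_mul 3).mul ((hid.mul c4).sub (c1.const_mul 3))).mul c6)).add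
      (((c1.const_mul 3).mul ((hid.mul c3).add c2)).mul c7)).add
      (c4.mul (((c1.const_mul 9).mul c3).sub
        ((c4.const_mul 5).mul ((hid.mul c3).add c2)))) |>.congr_deriv (by simp only [Pi.pow_apply, Pi.mul_apply, Pi.add_apply, Pi.sub_apply]; ring)
  rw [Syz.six_nabla3_M1 f x y p hH1x hI1x hH1y hI1y hH1p hI1p hne,
    Syz.six_nabla1_M3 f x y p c1 hH3p hI1p hb hI,
    Syz.two_M1_M5 f x y p hne, Syz.three_M3_sq f x y p hb hI, Syz.six_M1 f x y p hne,
    div_sub_div_same, ← add_div, div_sub_div_same, div_sub_div_same, div_eq_zero_iff]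
  left
  simp only [H1, H3, H5, I1]
  ring
end
end

section
/- With the same setup (f smooth, f > 0, I₁ = p f_y f_p − 3 f f_y + f_x f_p > 0), and M₂ = H₂/(I₀I₁) with H₂ = 3f(f_{xx} + 2pf_{xy} + p²f_{yy}) − 4(pf_y + f_x)², M₄ = H₄/(f^{1/2}I₁^{3/2}), M₅ = H₅/I₁², the syzygy 6∇₃(M₂) − 6∇₂(M₄) + 2M₂M₅ − 3M₄² + 6M₂ = 0 holds identically, where ∇₂ = A₂∂_x + pA₂∂_y with A₂ = f^{1/2}/I₁^{1/2} and ∇₃ = (ff_p/I₁)∂_x + (f(pf_p−3f)/I₁)∂_y + (f(pf_y+f_x)/I₁)∂_p. -/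
noncomputable section

section Infra


variable {U : Set (ℝ × ℝ × ℝ)} {g F G : ℝ × ℝ × ℝ → ℝ} {q : ℝ × ℝ × ℝ}

lemma hasPdxAt (hg : DifferentiableAt ℝ g q) :
    HasDerivAt (fun t => g (t, q.2.1, q.2.2)) (pdx g q) q.1 := by
  have hι : DifferentiableAt ℝ (fun t : ℝ => ((t, q.2.1, q.2.2) : ℝ×ℝ×ℝ)) q.1 := by fun_prop
  have h : DifferentiableAt ℝ (fun t => g (t, q.2.1, q.2.2)) q.1 :=
    DifferentiableAt.comp q.1 hg hι
  exact h.hasDerivAt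

lemma hasPdyAt (hg : DifferentiableAt ℝ g q) :
    HasDerivAt (fun t => g (q.1, t, q.2.2)) (pdy g q) q.2.1 := by
  have hι : DifferentiableAt ℝ (fun t : ℝ => ((q.1, t, q.2.2) : ℝ×ℝ×ℝ)) q.2.1 := by fun_prop
  have h : DifferentiableAt ℝ (fun t => g (q.1, t, q.2.2)) q.2.1 :=
    DifferentiableAt.comp q.2.1 hg hι
  exact h.hasDerivAt

lemma hasPdpAt (hg : DifferentiableAt ℝ g q) :
    HasDerivAt (fun t => g (q.1, q.2.1, t)) (pdp g q) q.2.2 := by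
  have hι : DifferentiableAt ℝ (fun t : ℝ => ((q.1, q.2.1, t) : ℝ×ℝ×ℝ)) q.2.2 := by fun_prop
  have h : DifferentiableAt ℝ (fun t => g (q.1, q.2.1, t)) q.2.2 :=
    DifferentiableAt.comp q.2.2 hg hι
  exact h.hasDerivAt

lemma pdx_eq_fderiv (hg : DifferentiableAt ℝ g q) : pdx g q = fderiv ℝ g q (1,0,0) := by
  have hι : HasDerivAt (fun t : ℝ => ((t, q.2.1, q.2.2) : ℝ×ℝ×ℝ)) ((1:ℝ),(0:ℝ),(0:ℝ)) q.1 :=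
    (hasDerivAt_id q.1).prodMk ((hasDerivAt_const q.1 q.2.1).prodMk (hasDerivAt_const q.1 q.2.2))
  exact (hg.hasFDerivAt.comp_hasDerivAt q.1 hι).deriv

lemma pdy_eq_fderiv (hg : DifferentiableAt ℝ g q) : pdy g q = fderiv ℝ g q (0,1,0) := by
  have hι : HasDerivAt (fun t : ℝ => ((q.1, t, q.2.2) : ℝ×ℝ×ℝ)) ((0:ℝ),(1:ℝ),(0:ℝ)) q.2.1 :=
    (hasDerivAt_const q.2.1 q.1).prodMk ((hasDerivAt_id q.2.1).prodMk (hasDerivAt_const q.2.1 q.2.2))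
  exact (hg.hasFDerivAt.comp_hasDerivAt q.2.1 hι).deriv

lemma pdp_eq_fderiv (hg : DifferentiableAt ℝ g q) : pdp g q = fderiv ℝ g q (0,0,1) := by
  have hι : HasDerivAt (fun t : ℝ => ((q.1, q.2.1, t) : ℝ×ℝ×ℝ)) ((0:ℝ),(0:ℝ),(1:ℝ)) q.2.2 :=
    (hasDerivAt_const q.2.2 q.1).prodMk ((hasDerivAt_const q.2.2 q.2.1).prodMk (hasDerivAt_id q.2.2))
  exact (hg.hasFDerivAt.comp_hasDerivAt q.2.2 hι).deriv

lemma diffAt (hU : IsOpen U) (hg : ContDiffOn ℝ (⊤ : ℕ∞) g U) (hq : q ∈ U) : DifferentiableAt ℝ g q :=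
  (hg.contDiffAt (hU.mem_nhds hq)).differentiableAt (by simp)

lemma contDiffOn_fderiv_apply (hU : IsOpen U) (hg : ContDiffOn ℝ (⊤ : ℕ∞) g U) (u : ℝ×ℝ×ℝ) :
    ContDiffOn ℝ (⊤ : ℕ∞) (fun w => fderiv ℝ g w u) U := by
  have hfd : ContDiffOn ℝ ((⊤ : ℕ∞) : WithTop ℕ∞) (fderiv ℝ g) U := hg.fderiv_of_isOpen hU (by simp)
  exact (ContinuousLinearMap.apply ℝ ℝ u).contDiff.comp_contDiffOn hfd

lemma contDiffOn_pdx (hU : IsOpen U) (hg : ContDiffOn ℝ (⊤ : ℕ∞) g U) : ContDiffOn ℝ (⊤ : ℕ∞) (pdx g) U :=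
  (contDiffOn_fderiv_apply hU hg (1,0,0)).congr
    (fun w hw => pdx_eq_fderiv (diffAt hU hg hw))

lemma contDiffOn_pdy (hU : IsOpen U) (hg : ContDiffOn ℝ (⊤ : ℕ∞) g U) : ContDiffOn ℝ (⊤ : ℕ∞) (pdy g) U :=
  (contDiffOn_fderiv_apply hU hg (0,1,0)).congr
    (fun w hw => pdy_eq_fderiv (diffAt hU hg hw))

lemma contDiffOn_pdp (hU : IsOpen U) (hg : ContDiffOn ℝ (⊤ : ℕ∞) g U) : ContDiffOn ℝ (⊤ : ℕ∞) (pdp g) U :=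
  (contDiffOn_fderiv_apply hU hg (0,0,1)).congr
    (fun w hw => pdp_eq_fderiv (diffAt hU hg hw))

lemma pdx_congrU (hU : IsOpen U) (hq : q ∈ U) (h : ∀ w ∈ U, F w = G w) :
    pdx F q = pdx G q := by
  apply Filter.EventuallyEq.deriv_eq
  have hc : ContinuousAt (fun t : ℝ => ((t, q.2.1, q.2.2) : ℝ×ℝ×ℝ)) q.1 := by fun_prop
  have hmem : ∀ᶠ t in nhds q.1, ((t, q.2.1, q.2.2) : ℝ×ℝ×ℝ) ∈ U :=
    hc.preimage_mem_nhds (hU.mem_nhds hq)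
  filter_upwards [hmem] with t ht using h _ ht

lemma pdy_congrU (hU : IsOpen U) (hq : q ∈ U) (h : ∀ w ∈ U, F w = G w) :
    pdy F q = pdy G q := by
  apply Filter.EventuallyEq.deriv_eq
  have hc : ContinuousAt (fun t : ℝ => ((q.1, t, q.2.2) : ℝ×ℝ×ℝ)) q.2.1 := by fun_prop
  have hmem : ∀ᶠ t in nhds q.2.1, ((q.1, t, q.2.2) : ℝ×ℝ×ℝ) ∈ U :=
    hc.preimage_mem_nhds (hU.mem_nhds hq)
  filter_upwards [hmem] with t ht using h _ ht

lemma pdp_congrU (hU : IsOpen U) (hq : q ∈ U) (h : ∀ w ∈ U, F w = G w) :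
    pdp F q = pdp G q := by
  apply Filter.EventuallyEq.deriv_eq
  have hc : ContinuousAt (fun t : ℝ => ((q.1, q.2.1, t) : ℝ×ℝ×ℝ)) q.2.2 := by fun_prop
  have hmem : ∀ᶠ t in nhds q.2.2, ((q.1, q.2.1, t) : ℝ×ℝ×ℝ) ∈ U :=
    hc.preimage_mem_nhds (hU.mem_nhds hq)
  filter_upwards [hmem] with t ht using h _ ht

lemma fderiv_fderiv_apply (hU : IsOpen U) (hg : ContDiffOn ℝ (⊤ : ℕ∞) g U) (hq : q ∈ U) (u : ℝ×ℝ×ℝ) :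
    fderiv ℝ (fun w => fderiv ℝ g w u) q = (ContinuousLinearMap.apply ℝ ℝ u).comp
      (fderiv ℝ (fderiv ℝ g) q) := by
  have hfd : ContDiffOn ℝ ((⊤ : ℕ∞) : WithTop ℕ∞) (fderiv ℝ g) U := hg.fderiv_of_isOpen hU (by simp)
  have hdf : DifferentiableAt ℝ (fderiv ℝ g) q :=
    (hfd.contDiffAt (hU.mem_nhds hq)).differentiableAt (by simp)
  exact ((ContinuousLinearMap.apply ℝ ℝ u).hasFDerivAt.comp q hdf.hasFDerivAt).fderiv

lemma sndSymm (hU : IsOpen U) (hg : ContDiffOn ℝ (⊤ : ℕ∞) g U) (hq : q ∈ U) (v w : ℝ×ℝ×ℝ) :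
    fderiv ℝ (fderiv ℝ g) q v w = fderiv ℝ (fderiv ℝ g) q w v :=
  ((hg.contDiffAt (hU.mem_nhds hq)).isSymmSndFDerivAt (by norm_num; exact WithTop.coe_le_coe.mpr le_top)) v w

lemma swap_xy (hU : IsOpen U) (hg : ContDiffOn ℝ (⊤ : ℕ∞) g U) (hq : q ∈ U) :
    pdx (pdy g) q = pdy (pdx g) q := by
  have h1 : pdx (pdy g) q = pdx (fun w => fderiv ℝ g w (0,1,0)) q :=
    pdx_congrU hU hq (fun w hw => pdy_eq_fderiv (diffAt hU hg hw))
  have h2 : pdy (pdx g) q = pdy (fun w => fderiv ℝ g w (1,0,0)) q :=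
    pdy_congrU hU hq (fun w hw => pdx_eq_fderiv (diffAt hU hg hw))
  rw [h1, h2,
    pdx_eq_fderiv (diffAt hU (contDiffOn_fderiv_apply hU hg (0,1,0)) hq),
    pdy_eq_fderiv (diffAt hU (contDiffOn_fderiv_apply hU hg (1,0,0)) hq),
    fderiv_fderiv_apply hU hg hq, fderiv_fderiv_apply hU hg hq]
  exact sndSymm hU hg hq _ _

lemma swap_xp (hU : IsOpen U) (hg : ContDiffOn ℝ (⊤ : ℕ∞) g U) (hq : q ∈ U) :
    pdx (pdp g) q = pdp (pdx g) q := by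
  have h1 : pdx (pdp g) q = pdx (fun w => fderiv ℝ g w (0,0,1)) q :=
    pdx_congrU hU hq (fun w hw => pdp_eq_fderiv (diffAt hU hg hw))
  have h2 : pdp (pdx g) q = pdp (fun w => fderiv ℝ g w (1,0,0)) q :=
    pdp_congrU hU hq (fun w hw => pdx_eq_fderiv (diffAt hU hg hw))
  rw [h1, h2,
    pdx_eq_fderiv (diffAt hU (contDiffOn_fderiv_apply hU hg (0,0,1)) hq),
    pdp_eq_fderiv (diffAt hU (contDiffOn_fderiv_apply hU hg (1,0,0)) hq),
    fderiv_fderiv_apply hU hg hq, fderiv_fderiv_apply hU hg hq]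
  exact sndSymm hU hg hq _ _

lemma swap_yp (hU : IsOpen U) (hg : ContDiffOn ℝ (⊤ : ℕ∞) g U) (hq : q ∈ U) :
    pdy (pdp g) q = pdp (pdy g) q := by
  have h1 : pdy (pdp g) q = pdy (fun w => fderiv ℝ g w (0,0,1)) q :=
    pdy_congrU hU hq (fun w hw => pdp_eq_fderiv (diffAt hU hg hw))
  have h2 : pdp (pdy g) q = pdp (fun w => fderiv ℝ g w (0,1,0)) q :=
    pdp_congrU hU hq (fun w hw => pdy_eq_fderiv (diffAt hU hg hw))
  rw [h1, h2,
    pdy_eq_fderiv (diffAt hU (contDiffOn_fderiv_apply hU hg (0,0,1)) hq),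
    pdp_eq_fderiv (diffAt hU (contDiffOn_fderiv_apply hU hg (0,1,0)) hq),
    fderiv_fderiv_apply hU hg hq, fderiv_fderiv_apply hU hg hq]
  exact sndSymm hU hg hq _ _

end Infra

set_option maxHeartbeats 2000000 in
/-- the fifth syzygy of relation (18):
`6∇₃(M₂) − 6∇₂(M₄) + 2M₂M₅ − 3M₄² + 6M₂ = 0`. -/
theorem syzygy_five (U : Set (ℝ × ℝ × ℝ)) (hU : IsOpen U)
    (f : ℝ × ℝ × ℝ → ℝ) (hf : ContDiffOn ℝ (⊤ : ℕ∞) f U)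
    (hfpos : ∀ q ∈ U, 0 < f q) (hI1pos : ∀ q ∈ U, 0 < I1 f q) :
    ∀ q ∈ U,
      6 * nabla3 f (M2 f) q - 6 * nabla2 f (M4 f) q
        + 2 * M2 f q * M5 f q - 3 * (M4 f q) ^ 2 + 6 * M2 f q = 0 := by
  intro q hq
  have hCf : ContDiffOn ℝ (⊤ : ℕ∞) f U := hf
  have hCfx := contDiffOn_pdx hU hCf
  have hCfy := contDiffOn_pdy hU hCf
  have hCfp := contDiffOn_pdp hU hCf
  have d_f := diffAt hU hCf hq
  have d_fx := diffAt hU hCfx hq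
  have d_fy := diffAt hU hCfy hq
  have d_fp := diffAt hU hCfp hq
  have d_fxx := diffAt hU (contDiffOn_pdx hU hCfx) hq
  have d_fxy := diffAt hU (contDiffOn_pdy hU hCfx) hq
  have d_fyy := diffAt hU (contDiffOn_pdy hU hCfy) hq
  have d_fxp := diffAt hU (contDiffOn_pdp hU hCfx) hq
  have d_fyp := diffAt hU (contDiffOn_pdp hU hCfy) hq
  have hfq : 0 < f q := hfpos q hq
  have hI1q : 0 < I1 f q := hI1pos q hq
  have hne_f : f q ≠ 0 := ne_of_gt hfq
  have hne_I1 : I1 f q ≠ 0 := ne_of_gt hI1q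
  have hne_fI1 : f q * I1 f q ≠ 0 := mul_ne_zero hne_f hne_I1
  have hne_den4 : Real.sqrt (f q) * (I1 f q * Real.sqrt (I1 f q)) ≠ 0 := by positivity
  have hx_f : HasDerivAt (fun t => (f) (t, q.2.1, q.2.2)) (pdx (f) q) q.1 := hasPdxAt d_f
  have hy_f : HasDerivAt (fun t => (f) (q.1, t, q.2.2)) (pdy (f) q) q.2.1 := hasPdyAt d_f
  have hp_f : HasDerivAt (fun t => (f) (q.1, q.2.1, t)) (pdp (f) q) q.2.2 := hasPdpAt d_f
  have hx_fx : HasDerivAt (fun t => (pdx f) (t, q.2.1, q.2.2)) (pdx (pdx f) q) q.1 := hasPdxAt d_fx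
  have hy_fx : HasDerivAt (fun t => (pdx f) (q.1, t, q.2.2)) (pdy (pdx f) q) q.2.1 := hasPdyAt d_fx
  have hp_fx : HasDerivAt (fun t => (pdx f) (q.1, q.2.1, t)) (pdp (pdx f) q) q.2.2 := hasPdpAt d_fx
  have hx_fy : HasDerivAt (fun t => (pdy f) (t, q.2.1, q.2.2)) (pdx (pdy f) q) q.1 := hasPdxAt d_fy
  have hy_fy : HasDerivAt (fun t => (pdy f) (q.1, t, q.2.2)) (pdy (pdy f) q) q.2.1 := hasPdyAt d_fy
  have hp_fy : HasDerivAt (fun t => (pdy f) (q.1, q.2.1, t)) (pdp (pdy f) q) q.2.2 := hasPdpAt d_fy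
  have hx_fp : HasDerivAt (fun t => (pdp f) (t, q.2.1, q.2.2)) (pdx (pdp f) q) q.1 := hasPdxAt d_fp
  have hy_fp : HasDerivAt (fun t => (pdp f) (q.1, t, q.2.2)) (pdy (pdp f) q) q.2.1 := hasPdyAt d_fp
  have hp_fp : HasDerivAt (fun t => (pdp f) (q.1, q.2.1, t)) (pdp (pdp f) q) q.2.2 := hasPdpAt d_fp
  have hx_fxx : HasDerivAt (fun t => (pdx (pdx f)) (t, q.2.1, q.2.2)) (pdx (pdx (pdx f)) q) q.1 := hasPdxAt d_fxx
  have hy_fxx : HasDerivAt (fun t => (pdx (pdx f)) (q.1, t, q.2.2)) (pdy (pdx (pdx f)) q) q.2.1 := hasPdyAt d_fxx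
  have hp_fxx : HasDerivAt (fun t => (pdx (pdx f)) (q.1, q.2.1, t)) (pdp (pdx (pdx f)) q) q.2.2 := hasPdpAt d_fxx
  have hx_fxy : HasDerivAt (fun t => (pdy (pdx f)) (t, q.2.1, q.2.2)) (pdx (pdy (pdx f)) q) q.1 := hasPdxAt d_fxy
  have hy_fxy : HasDerivAt (fun t => (pdy (pdx f)) (q.1, t, q.2.2)) (pdy (pdy (pdx f)) q) q.2.1 := hasPdyAt d_fxy
  have hp_fxy : HasDerivAt (fun t => (pdy (pdx f)) (q.1, q.2.1, t)) (pdp (pdy (pdx f)) q) q.2.2 := hasPdpAt d_fxy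
  have hx_fyy : HasDerivAt (fun t => (pdy (pdy f)) (t, q.2.1, q.2.2)) (pdx (pdy (pdy f)) q) q.1 := hasPdxAt d_fyy
  have hy_fyy : HasDerivAt (fun t => (pdy (pdy f)) (q.1, t, q.2.2)) (pdy (pdy (pdy f)) q) q.2.1 := hasPdyAt d_fyy
  have hp_fyy : HasDerivAt (fun t => (pdy (pdy f)) (q.1, q.2.1, t)) (pdp (pdy (pdy f)) q) q.2.2 := hasPdpAt d_fyy
  have hx_fxp : HasDerivAt (fun t => (pdp (pdx f)) (t, q.2.1, q.2.2)) (pdx (pdp (pdx f)) q) q.1 := hasPdxAt d_fxp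
  have hy_fxp : HasDerivAt (fun t => (pdp (pdx f)) (q.1, t, q.2.2)) (pdy (pdp (pdx f)) q) q.2.1 := hasPdyAt d_fxp
  have hp_fxp : HasDerivAt (fun t => (pdp (pdx f)) (q.1, q.2.1, t)) (pdp (pdp (pdx f)) q) q.2.2 := hasPdpAt d_fxp
  have hx_fyp : HasDerivAt (fun t => (pdp (pdy f)) (t, q.2.1, q.2.2)) (pdx (pdp (pdy f)) q) q.1 := hasPdxAt d_fyp
  have hy_fyp : HasDerivAt (fun t => (pdp (pdy f)) (q.1, t, q.2.2)) (pdy (pdp (pdy f)) q) q.2.1 := hasPdyAt d_fyp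
  have hp_fyp : HasDerivAt (fun t => (pdp (pdy f)) (q.1, q.2.1, t)) (pdp (pdp (pdy f)) q) q.2.2 := hasPdpAt d_fyp
  have h2x : HasDerivAt (fun t => (M2 f) (t, q.2.1, q.2.2)) _ q.1 :=
    (((((hasDerivAt_const q.1 (3:ℝ)).mul hx_f).mul ((hx_fxx.add (((hasDerivAt_const q.1 (2:ℝ)).mul (hasDerivAt_const q.1 q.2.2)).mul hx_fxy)).add (((hasDerivAt_const q.1 q.2.2).pow 2).mul hx_fyy))).sub ((hasDerivAt_const q.1 (4:ℝ)).mul ((((hasDerivAt_const q.1 q.2.2).mul hx_fy).add hx_fx).pow 2))).div (hx_f.mul (((((hasDerivAt_const q.1 q.2.2).mul hx_fy).mul hx_fp).sub (((hasDerivAt_const q.1 (3:ℝ)).mul hx_f).mul hx_fy)).add (hx_fx.mul hx_fp))) hne_fI1)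
  have e2x : pdx (M2 f) q = _ := h2x.deriv
  have h2y : HasDerivAt (fun t => (M2 f) (q.1, t, q.2.2)) _ q.2.1 :=
    (((((hasDerivAt_const q.2.1 (3:ℝ)).mul hy_f).mul ((hy_fxx.add (((hasDerivAt_const q.2.1 (2:ℝ)).mul (hasDerivAt_const q.2.1 q.2.2)).mul hy_fxy)).add (((hasDerivAt_const q.2.1 q.2.2).pow 2).mul hy_fyy))).sub ((hasDerivAt_const q.2.1 (4:ℝ)).mul ((((hasDerivAt_const q.2.1 q.2.2).mul hy_fy).add hy_fx).pow 2))).div (hy_f.mul (((((hasDerivAt_const q.2.1 q.2.2).mul hy_fy).mul hy_fp).sub (((hasDerivAt_const q.2.1 (3:ℝ)).mul hy_f).mul hy_fy)).add (hy_fx.mul hy_fp))) hne_fI1)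
  have e2y : pdy (M2 f) q = _ := h2y.deriv
  have h2p : HasDerivAt (fun t => (M2 f) (q.1, q.2.1, t)) _ q.2.2 :=
    (((((hasDerivAt_const q.2.2 (3:ℝ)).mul hp_f).mul ((hp_fxx.add (((hasDerivAt_const q.2.2 (2:ℝ)).mul (hasDerivAt_id q.2.2)).mul hp_fxy)).add (((hasDerivAt_id q.2.2).pow 2).mul hp_fyy))).sub ((hasDerivAt_const q.2.2 (4:ℝ)).mul ((((hasDerivAt_id q.2.2).mul hp_fy).add hp_fx).pow 2))).div (hp_f.mul (((((hasDerivAt_id q.2.2).mul hp_fy).mul hp_fp).sub (((hasDerivAt_const q.2.2 (3:ℝ)).mul hp_f).mul hp_fy)).add (hp_fx.mul hp_fp))) hne_fI1)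
  have e2p : pdp (M2 f) q = _ := h2p.deriv
  have h4x : HasDerivAt (fun t => (M4 f) (t, q.2.1, q.2.2)) _ q.1 :=
    (((((hasDerivAt_const q.1 (3:ℝ)).mul hx_f).mul ((((hx_fp.mul hx_fxx).add (((((hasDerivAt_const q.1 (2:ℝ)).mul (hasDerivAt_const q.1 q.2.2)).mul hx_fp).sub ((hasDerivAt_const q.1 (3:ℝ)).mul hx_f)).mul hx_fxy)).add ((((hasDerivAt_const q.1 q.2.2).mul hx_fy).add hx_fx).mul (hx_fxp.add ((hasDerivAt_const q.1 q.2.2).mul hx_fyp)))).add (((hasDerivAt_const q.1 q.2.2).mul (((hasDerivAt_const q.1 q.2.2).mul hx_fp).sub ((hasDerivAt_const q.1 (3:ℝ)).mul hx_f))).mul hx_fyy))).sub ((((hasDerivAt_const q.1 q.2.2).mul hx_fy).add hx_fx).mul ((((hasDerivAt_const q.1 (7:ℝ)).mul hx_fp).mul (((hasDerivAt_const q.1 q.2.2).mul hx_fy).add hx_fx)).sub (((hasDerivAt_const q.1 (12:ℝ)).mul hx_f).mul hx_fy)))).div ((hx_f.sqrt hne_f).mul ((((((hasDerivAt_const q.1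 q.2.2).mul hx_fy).mul hx_fp).sub (((hasDerivAt_const q.1 (3:ℝ)).mul hx_f).mul hx_fy)).add (hx_fx.mul hx_fp)).mul ((((((hasDerivAt_const q.1 q.2.2).mul hx_fy).mul hx_fp).sub (((hasDerivAt_const q.1 (3:ℝ)).mul hx_f).mul hx_fy)).add (hx_fx.mul hx_fp)).sqrt hne_I1))) hne_den4)
  have e4x : pdx (M4 f) q = _ := h4x.deriv
  have h4y : HasDerivAt (fun t => (M4 f) (q.1, t, q.2.2)) _ q.2.1 :=
    (((((hasDerivAt_const q.2.1 (3:ℝ)).mul hy_f).mul ((((hy_fp.mul hy_fxx).add (((((hasDerivAt_const q.2.1 (2:ℝ)).mul (hasDerivAt_const q.2.1 q.2.2)).mul hy_fp).sub ((hasDerivAt_const q.2.1 (3:ℝ)).mul hy_f)).mul hy_fxy)).add ((((hasDerivAt_const q.2.1 q.2.2).mul hy_fy).add hy_fx).mul (hy_fxp.add ((hasDerivAt_const q.2.1 q.2.2).mul hy_fyp)))).add (((hasDerivAt_const q.2.1 q.2.2).mul (((hasDerivAt_const q.2.1 q.2.2).mul hy_fp).sub ((hasDerivAt_const q.2.1 (3:ℝ)).mul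 hy_f))).mul hy_fyy))).sub ((((hasDerivAt_const q.2.1 q.2.2).mul hy_fy).add hy_fx).mul ((((hasDerivAt_const q.2.1 (7:ℝ)).mul hy_fp).mul (((hasDerivAt_const q.2.1 q.2.2).mul hy_fy).add hy_fx)).sub (((hasDerivAt_const q.2.1 (12:ℝ)).mul hy_f).mul hy_fy)))).div ((hy_f.sqrt hne_f).mul ((((((hasDerivAt_const q.2.1 q.2.2).mul hy_fy).mul hy_fp).sub (((hasDerivAt_const q.2.1 (3:ℝ)).mul hy_f).mul hy_fy)).add (hy_fx.mul hy_fp)).mul ((((((hasDerivAt_const q.2.1 q.2.2).mul hy_fy).mul hy_fp).sub (((hasDerivAt_const q.2.1 (3:ℝ)).mul hy_f).mul hy_fy)).add (hy_fx.mul hy_fp)).sqrt hne_I1))) hne_den4)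
  have e4y : pdy (M4 f) q = _ := h4y.deriv

  have hc1 : pdx (pdy f) q = pdy (pdx f) q := swap_xy hU hCf hq
  have hc2 : pdx (pdp f) q = pdp (pdx f) q := swap_xp hU hCf hq
  have hc3 : pdy (pdp f) q = pdp (pdy f) q := swap_yp hU hCf hq
  have hc4 : pdx (pdy (pdx f)) q = pdy (pdx (pdx f)) q := swap_xy hU hCfx hq
  have hc5 : pdx (pdy (pdy f)) q = pdy (pdy (pdx f)) q :=
    (swap_xy hU hCfy hq).trans (pdy_congrU hU hq (fun w hw => swap_xy hU hCf hw))
  have hc6 : pdx (pdp (pdx f)) q = pdp (pdx (pdx f)) q := swap_xp hU hCfx hq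
  have hc7 : pdx (pdp (pdy f)) q = pdp (pdy (pdx f)) q :=
    (swap_xp hU hCfy hq).trans (pdp_congrU hU hq (fun w hw => swap_xy hU hCf hw))
  have hc8 : pdy (pdp (pdx f)) q = pdp (pdy (pdx f)) q := swap_yp hU hCfx hq
  have hc9 : pdy (pdp (pdy f)) q = pdp (pdy (pdy f)) q := swap_yp hU hCfy hq
  have hs2 : Real.sqrt (f q) ^ 2 = f q := Real.sq_sqrt hfq.le
  have hr2 : Real.sqrt (I1 f q) ^ 2 = I1 f q := Real.sq_sqrt hI1q.le
  have hspos : 0 < Real.sqrt (f q) := Real.sqrt_pos.mpr hfq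
  have hrpos : 0 < Real.sqrt (I1 f q) := Real.sqrt_pos.mpr hI1q
  have hJdef : I1 f q = q.2.2 * pdy f q * pdp f q - 3 * f q * pdy f q + pdx f q * pdp f q := rfl
  simp only [nabla2, nabla3]
  rw [e2x, e2y, e2p, e4x, e4y]
  simp only [Pi.mul_apply, Pi.add_apply, Pi.sub_apply, Pi.pow_apply, Pi.div_apply, Prod.mk.eta, id_eq, M2, M4, M5, A2c, A3c, B3c, C3c, H2, H4, H5]
  rw [show q.2.2 * pdy f q * pdp f q - 3 * f q * pdy f q + pdx f q * pdp f q = I1 f q from rfl]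
  simp only [hc1, hc2, hc3, hc4, hc5, hc6, hc7, hc8, hc9]
  set P := q.2.2 with hPd
  set J := I1 f q with hJd
  set r := Real.sqrt J with hrd
  set FF := f q with hFd
  set s := Real.sqrt FF with hsd
  set Fx := pdx f q with hFxd
  set Fy := pdy f q with hFyd
  set Fp := pdp f q with hFpd
  set Fxx := pdx (pdx f) q with hFxxd
  set Fxy := pdy (pdx f) q with hFxyd
  set Fyy := pdy (pdy f) q with hFyyd
  set Fxp := pdp (pdx f) q with hFxpd
  set Fyp := pdp (pdy f) q with hFypd
  set Fpp := pdp (pdp f) q with hFppd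
  set Dxxx := pdx (pdx (pdx f)) q with hd1
  set Dxxy := pdy (pdx (pdx f)) q with hd2
  set Dxyy := pdy (pdy (pdx f)) q with hd3
  set Dyyy := pdy (pdy (pdy f)) q with hd4
  set Dxxp := pdp (pdx (pdx f)) q with hd5
  set Dxyp := pdp (pdy (pdx f)) q with hd6
  set Dyyp := pdp (pdy (pdy f)) q with hd7
  clear_value P J r FF s Fx Fy Fp Fxx Fxy Fyy Fxp Fyp Fpp Dxxx Dxxy Dxyy Dyyy Dxxp Dxyp Dyyp
  clear hPd hJd hrd hFd hsd hFxd hFyd hFpd hFxxd hFxyd hFyyd hFxpd hFypd hFppd hd1 hd2 hd3 hd4 hd5 hd6 hd7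
  have hsne : s ≠ 0 := ne_of_gt hspos
  have hrne : r ≠ 0 := ne_of_gt hrpos
  have hrI : r ^ 2 = P * Fy * Fp - 3 * FF * Fy + Fx * Fp := hr2.trans hJdef
  field_simp
  have hrI2 : r ^ 2 = P * Fy * Fp - 3 * s ^ 2 * Fy + Fx * Fp := by
    rw [hr2, hJdef, hs2]
  rw [← hs2, ← hr2]
  linear_combination ((36:ℝ) * s^4 * r^6 * Fxx + (72:ℝ) * P * s^4 * r^6 * Fxy + (36:ℝ) * P^2 * s^4 * r^6 * Fyy + (-48:ℝ) * P^2 * s^2 * r^6 * Fy^2 + (-96:ℝ) * P * s^2 * r^6 * Fx * Fy + (-48:ℝ) * s^2 * r^6 * Fx^2 + (90:ℝ) * s^4 * r^4 * Fx * Fp * Fxx + (180:ℝ) * P * s^4 * r^4 * Fx * Fp * Fxy + (180:ℝ) * P^2 * s^4 * r^4 * Fy * Fp * Fxy + (90:ℝ) * P * s^4 * r^4 * Fy * Fp * Fxx + (18:ℝ) * P^2 * s^2 * r^4 * Fx * Fy^2 * Fp + (18:ℝ) * P * s^2 * r^4 * Fx^2 * Fy * Fp + (6:ℝ) * s^2 *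 r^4 * Fx^3 * Fp + (90:ℝ) * P^3 * s^4 * r^4 * Fy * Fp * Fyy + (90:ℝ) * P^2 * s^4 * r^4 * Fx * Fp * Fyy + (6:ℝ) * P^3 * s^2 * r^4 * Fy^3 * Fp + (-126:ℝ) * P * s^6 * r^4 * Fy * Fxy + (126:ℝ) * P^2 * s^6 * r^4 * Fy * Fyy + (378:ℝ) * P * s^6 * r^4 * Fx * Fyy + (378:ℝ) * s^6 * r^4 * Fx * Fxy + (-168:ℝ) * P^2 * s^4 * r^4 * Fy^3 + (-336:ℝ) * P * s^4 * r^4 * Fx * Fy^2 + (-168:ℝ) * s^4 * r^4 * Fx^2 * Fy + (-30:ℝ) * P^3 * s^4 * r^4 * Fy^2 * Fyp + (-30:ℝ) * P^2 * s^4 * r^4 * Fy^2 * Fxp + (-60:ℝ) * P^2 * s^4 * r^4 * Fx * Fy * Fyp + (-60:ℝ) * P * s^4 * r^4 * Fx * Fy * Fxp + (-30:ℝ) * P * s^4 * r^4 * Fx^2 * Fyp + (-30:ℝ) * s^4 * r^4 * Fx^2 * Fxp + (-72:ℝ) * s^6 * r^4 * Fxx * Fxp + (-144:ℝ) * P * s^6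 * r^4 * Fxy * Fxp + (-144:ℝ) * P^2 * s^6 * r^4 * Fxy * Fyp + (-72:ℝ) * P * s^6 * r^4 * Fxx * Fyp + (-72:ℝ) * P^2 * s^6 * r^4 * Fyy * Fxp + (-252:ℝ) * s^6 * r^4 * Fy * Fxx + (-72:ℝ) * P^3 * s^6 * r^4 * Fyy * Fyp) * hrI2
end
end
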